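/- arXiv:2407.10600 — 2 statements merged into one kernel-verified Lean document; each statement's English description precedes it below -/
import Mathlib

section
/- Let S ⊂ ℝ^d be a finite set symmetric about the origin, let m ≥ 0, and let W = W^{D_S}_{≤m} be the Wronskian matrix of the Dirichlet kernel D_S of order m. If the Vandermonde matrix V_{≤m}(S) has full column rank p_m, then for every matrix R̃ ∈ ℝ^{n×p_m} of full row rank n (with n ≤ p_m) one has det(R̃ W R̃^T) > 0; in particular R̃ W R̃^T is Hermitian positive definite. -/
open scoped BigOperators ComplexOrder
open Matrix

/-- The finite set of multi-indices `α : Fin d → ℕ` with total degree `|α| ≤ k` (the set `ℙ_k`). -/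
def MIdx (d k : ℕ) : Finset (Fin d → ℕ) :=
  (Fintype.piFinset fun _ => Finset.range (k + 1)).filter fun α => ∑ i, α i ≤ k

/-- Factorial of a multi-index, `α! = α₁!⋯α_d!`. -/
def mfact {d : ℕ} (α : Fin d → ℕ) : ℕ := ∏ j, Nat.factorial (α j)

/-- First-order partial derivative in the `j`-th coordinate of a `ℂ`-valued function on `ℝ^d`. -/
noncomputable def pd1 {d : ℕ} (j : Fin d) (f : (Fin d → ℝ) → ℂ) : (Fin d → ℝ) → ℂ :=
  fun x => fderiv ℝ f x (Pi.single j 1)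

/-- Iterated partial derivative in the `j`-th coordinate. -/
noncomputable def pdPow {d : ℕ} (j : Fin d) : ℕ → ((Fin d → ℝ) → ℂ) → ((Fin d → ℝ) → ℂ)
  | 0 => id
  | k + 1 => fun f => pd1 j (pdPow j k f)

/-- Partial derivative `∂^α` of a `ℂ`-valued function on `ℝ^d`, for a multi-index `α`. -/
noncomputable def pdMulti {d : ℕ} (α : Fin d → ℕ) (f : (Fin d → ℝ) → ℂ) : (Fin d → ℝ) → ℂ :=
  (List.finRange d).foldr (fun j g => pdPow j (α j) g) f

/-- Mixed partial derivative `K^{(α,β)} = ∂_x^α ∂_y^β K` of a kernel. -/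
noncomputable def mixedPartial {d : ℕ} (K : (Fin d → ℝ) → (Fin d → ℝ) → ℂ)
    (α β : Fin d → ℕ) : (Fin d → ℝ) → (Fin d → ℝ) → ℂ :=
  fun x y => pdMulti α (fun x' => pdMulti β (fun y' => K x' y') y) x

/-- The Dirichlet kernel `D_S(x,y) = Σ_{ω∈S} exp(i⟨x-y, ω⟩)` of a finite frequency set. -/
noncomputable def dirichletKer {d : ℕ} (S : Finset (Fin d → ℝ)) :
    (Fin d → ℝ) → (Fin d → ℝ) → ℂ :=
  fun x y => ∑ ω ∈ S, Complex.exp (Complex.I * ((∑ l, (x l - y l) * ω l : ℝ) : ℂ))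

/-- The Wronskian matrix `W^K_{≤m} = [K^{(α,β)}(0,0)/(α!β!)]_{α,β∈ℙ_m}` of a kernel. -/
noncomputable def wronskianC {d : ℕ} (m : ℕ) (K : (Fin d → ℝ) → (Fin d → ℝ) → ℂ) :
    Matrix ↥(MIdx d m) ↥(MIdx d m) ℂ :=
  fun α β => mixedPartial K α.1 β.1 0 0 / ((mfact α.1 : ℂ) * (mfact β.1 : ℂ))

/-- The multivariate Vandermonde matrix `V_{≤m}(S)` of a frequency set, over `ℂ`. -/
noncomputable def VdMS {d : ℕ} (m : ℕ) (S : Finset (Fin d → ℝ)) :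
    Matrix ↥S ↥(MIdx d m) ℂ :=
  fun ω α => ∏ j, ((ω.1 j : ℝ) : ℂ) ^ α.1 j

-- aux
noncomputable def clmOf {d : ℕ} (c : Fin d → ℂ) : (Fin d → ℝ) →L[ℝ] ℂ :=
  ∑ l, (ContinuousLinearMap.proj l).smulRight (c l)

lemma clmOf_apply {d : ℕ} (c : Fin d → ℂ) (x : Fin d → ℝ) :
    clmOf c x = ∑ l, (x l : ℂ) * c l := by
  simp [clmOf, ContinuousLinearMap.sum_apply, Complex.real_smul]

lemma clmOf_single {d : ℕ} (c : Fin d → ℂ) (j : Fin d) :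
    clmOf c (Pi.single j 1) = c j := by
  rw [clmOf_apply]
  simp [Pi.single_apply]
  simp [apply_ite (fun r : ℝ => (r : ℂ))]

lemma hasFDerivAt_term {d : ℕ} (a : ℂ) (c : Fin d → ℂ) (b : ℂ) (x : Fin d → ℝ) :
    HasFDerivAt (fun x : Fin d → ℝ => a * Complex.exp ((∑ l, (x l : ℂ) * c l) + b))
      ((a * Complex.exp ((∑ l, (x l : ℂ) * c l) + b)) • clmOf c) x := by
  have hg : HasFDerivAt (fun x : Fin d → ℝ => (∑ l, (x l : ℂ) * c l) + b) (clmOf c) x := by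
    have := ((clmOf c).hasFDerivAt (x := x)).add_const b
    simpa only [clmOf_apply] using this
  have := (hg.cexp).const_mul a
  simpa [smul_smul, mul_assoc] using this

noncomputable def sExp {d : ℕ} (S : Finset (Fin d → ℝ)) (a : (Fin d → ℝ) → ℂ)
    (c : (Fin d → ℝ) → Fin d → ℂ) (b : (Fin d → ℝ) → ℂ) : (Fin d → ℝ) → ℂ :=
  fun x => ∑ ω ∈ S, a ω * Complex.exp ((∑ l, (x l : ℂ) * c ω l) + b ω)

lemma sExp_congr {d : ℕ} {S : Finset (Fin d → ℝ)} {a a' : (Fin d → ℝ) → ℂ}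
    {c : (Fin d → ℝ) → Fin d → ℂ} {b : (Fin d → ℝ) → ℂ}
    (h : ∀ ω ∈ S, a ω = a' ω) : sExp S a c b = sExp S a' c b := by
  funext x
  exact Finset.sum_congr rfl fun ω hω => by rw [h ω hω]

lemma pd1_sExp {d : ℕ} (j : Fin d) (S : Finset (Fin d → ℝ)) (a : (Fin d → ℝ) → ℂ)
    (c : (Fin d → ℝ) → Fin d → ℂ) (b : (Fin d → ℝ) → ℂ) :
    pd1 j (sExp S a c b) = sExp S (fun ω => a ω * c ω j) c b := by
  funext x
  have H : HasFDerivAt (sExp S a c b)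
      (∑ ω ∈ S, (a ω * Complex.exp ((∑ l, (x l : ℂ) * c ω l) + b ω)) • clmOf (c ω)) x :=
    HasFDerivAt.fun_sum fun ω _ => hasFDerivAt_term (a ω) (c ω) (b ω) x
  rw [pd1, H.fderiv]
  simp only [ContinuousLinearMap.sum_apply, ContinuousLinearMap.smul_apply, clmOf_single,
    sExp, smul_eq_mul]
  exact Finset.sum_congr rfl fun ω _ => by ring

lemma pdPow_sExp {d : ℕ} (j : Fin d) (k : ℕ) (S : Finset (Fin d → ℝ)) (a : (Fin d → ℝ) → ℂ)
    (c : (Fin d → ℝ) → Fin d → ℂ) (b : (Fin d → ℝ) → ℂ) :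
    pdPow j k (sExp S a c b) = sExp S (fun ω => a ω * c ω j ^ k) c b := by
  induction k with
  | zero => simp only [pdPow, id_eq, pow_zero, mul_one]
  | succ k ih =>
    show pd1 j (pdPow j k (sExp S a c b)) = _
    rw [ih, pd1_sExp]
    exact sExp_congr fun ω _ => by ring

lemma foldr_sExp {d : ℕ} (L : List (Fin d)) (α : Fin d → ℕ) (S : Finset (Fin d → ℝ))
    (a : (Fin d → ℝ) → ℂ) (c : (Fin d → ℝ) → Fin d → ℂ) (b : (Fin d → ℝ) → ℂ) :
    L.foldr (fun j g => pdPow j (α j) g) (sExp S a c b)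
      = sExp S (fun ω => a ω * (L.map fun j => c ω j ^ α j).prod) c b := by
  induction L with
  | nil => simpa using (sExp_congr (S := S) (c := c) (b := b)
      (fun ω _ => (mul_one (a ω)).symm))
  | cons j L ih =>
    rw [List.foldr_cons, ih, pdPow_sExp]
    exact sExp_congr fun ω _ => by simp [List.prod_cons]; ring

lemma pdMulti_sExp {d : ℕ} (α : Fin d → ℕ) (S : Finset (Fin d → ℝ))
    (a : (Fin d → ℝ) → ℂ) (c : (Fin d → ℝ) → Fin d → ℂ) (b : (Fin d → ℝ) → ℂ) :
    pdMulti α (sExp S a c b) = sExp S (fun ω => a ω * ∏ j, c ω j ^ α j) c b := by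
  rw [pdMulti, foldr_sExp]
  exact sExp_congr fun ω _ => by rw [Fin.prod_univ_def]

lemma dk_as_sExp {d : ℕ} (S : Finset (Fin d → ℝ)) (x' : Fin d → ℝ) :
    (fun y' => dirichletKer S x' y')
      = sExp S (fun _ => 1) (fun ω l => -(Complex.I * (ω l : ℂ)))
          (fun ω => ∑ l, ((x' l : ℝ) : ℂ) * (Complex.I * (ω l : ℂ))) := by
  funext y
  unfold dirichletKer sExp
  refine Finset.sum_congr rfl fun ω _ => ?_
  rw [one_mul]
  congr 1
  push_cast
  rw [Finset.mul_sum, ← Finset.sum_add_distrib]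
  exact Finset.sum_congr rfl fun l _ => by ring

lemma sum_zero_mul {d : ℕ} (c : Fin d → ℂ) : (∑ l, (((0 : Fin d → ℝ) l : ℝ) : ℂ) * c l) = 0 := by
  simp

lemma inner_formula {d : ℕ} (S : Finset (Fin d → ℝ)) (β : Fin d → ℕ) :
    (fun x' => pdMulti β (fun y' => dirichletKer S x' y') 0)
      = sExp S (fun ω => ∏ j, (-(Complex.I * (ω j : ℂ))) ^ β j)
          (fun ω l => Complex.I * (ω l : ℂ)) (fun _ => 0) := by
  funext x'
  rw [dk_as_sExp, pdMulti_sExp]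
  show sExp _ _ _ _ (0 : Fin d → ℝ) = _
  unfold sExp
  refine Finset.sum_congr rfl fun ω _ => ?_
  simp only [Pi.zero_apply, Complex.ofReal_zero, zero_mul, Finset.sum_const_zero, zero_add,
    add_zero, one_mul]

lemma mixedPartial_dirichlet {d : ℕ} (S : Finset (Fin d → ℝ)) (α β : Fin d → ℕ) :
    mixedPartial (dirichletKer S) α β 0 0
      = ∑ ω ∈ S, (∏ j, (Complex.I * (ω j : ℂ)) ^ α j) *
          ∏ j, (-(Complex.I * (ω j : ℂ))) ^ β j := by
  show pdMulti α (fun x' => pdMulti β (fun y' => dirichletKer S x' y') 0) 0 = _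
  rw [inner_formula, pdMulti_sExp]
  unfold sExp
  refine Finset.sum_congr rfl fun ω _ => ?_
  simp only [Pi.zero_apply, Complex.ofReal_zero, zero_mul, Finset.sum_const_zero, zero_add,
    add_zero, Complex.exp_zero, mul_one]
  ring

noncomputable def Nmat {d m : ℕ} (S : Finset (Fin d → ℝ)) : Matrix ↥S ↥(MIdx d m) ℂ :=
  fun ω α => (∏ j, (-(Complex.I * (ω.1 j : ℂ))) ^ α.1 j) / (mfact α.1 : ℂ)

lemma mfact_ne_zero {d : ℕ} (α : Fin d → ℕ) : (mfact α : ℂ) ≠ 0 := by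
  have : mfact α ≠ 0 := Finset.prod_ne_zero_iff.mpr fun j _ => (Nat.factorial_pos _).ne'
  exact_mod_cast this

lemma star_neg_I_mul (r : ℝ) : star (-(Complex.I * (r : ℂ))) = Complex.I * (r : ℂ) := by
  simp [Complex.star_def, Complex.conj_ofReal]

lemma wronskian_eq {d m : ℕ} (S : Finset (Fin d → ℝ)) :
    wronskianC m (dirichletKer S) = (Nmat (m := m) S)ᴴ * Nmat S := by
  ext α β
  rw [Matrix.mul_apply]
  unfold wronskianC
  rw [mixedPartial_dirichlet, Finset.sum_div, ← Finset.sum_coe_sort S]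
  refine Finset.sum_congr rfl fun ω _ => ?_
  rw [Matrix.conjTranspose_apply]
  unfold Nmat
  rw [star_div₀, star_natCast]
  rw [show star (∏ j, (-(Complex.I * ((ω : Fin d → ℝ) j : ℂ))) ^ α.1 j)
      = ∏ j, (Complex.I * ((ω : Fin d → ℝ) j : ℂ)) ^ α.1 j by
    rw [star_prod]
    exact Finset.prod_congr rfl fun j _ => by rw [star_pow, star_neg_I_mul]]
  rw [div_mul_div_comm]

lemma Nmat_eq_mul_diag {d m : ℕ} (S : Finset (Fin d → ℝ)) :
    Nmat (m := m) S = VdMS m S *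
      Matrix.diagonal (fun α : ↥(MIdx d m) => (-Complex.I) ^ (∑ j, α.1 j) / (mfact α.1 : ℂ)) := by
  ext ω α
  rw [Matrix.mul_diagonal]
  unfold Nmat VdMS
  rw [← Finset.prod_pow_eq_pow_sum, ← mul_div_assoc, ← Finset.prod_mul_distrib]
  congr 1
  exact Finset.prod_congr rfl fun j _ => by rw [← mul_pow]; ring_nf

lemma diag_det_unit {d m : ℕ} :
    IsUnit (Matrix.diagonal
      (fun α : ↥(MIdx d m) => (-Complex.I) ^ (∑ j, α.1 j) / (mfact α.1 : ℂ))).det := by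
  rw [Matrix.det_diagonal]
  rw [isUnit_iff_ne_zero]
  refine Finset.prod_ne_zero_iff.mpr fun α _ => ?_
  exact div_ne_zero (pow_ne_zero _ (neg_ne_zero.mpr Complex.I_ne_zero)) (mfact_ne_zero _)

lemma mulVec_injective_of_rank {K : Type*} [Field K] {ι κ : Type*} [Fintype ι] [Fintype κ]
    [DecidableEq κ] (A : Matrix ι κ K) (h : A.rank = Fintype.card κ) :
    Function.Injective A.mulVec := by
  rw [← Matrix.coe_mulVecLin]
  rw [← LinearMap.ker_eq_bot]
  have h2 := LinearMap.finrank_range_add_finrank_ker A.mulVecLin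
  rw [Matrix.rank] at h
  rw [show Module.finrank K (κ → K) = Fintype.card κ by simp] at h2
  rw [h] at h2
  have : Module.finrank K (LinearMap.ker A.mulVecLin) = 0 := by omega
  exact Submodule.finrank_eq_zero.mp this

lemma posDef_conjTranspose_mul_self_of_inj {ι κ : Type*} [Fintype ι] [Fintype κ]
    (A : Matrix ι κ ℂ) (h : Function.Injective A.mulVec) : (Aᴴ * A).PosDef := by
  refine Matrix.posDef_iff_dotProduct_mulVec.mpr ⟨Matrix.isHermitian_conjTranspose_mul_self A, fun x hx => ?_⟩
  rw [← Matrix.mulVec_mulVec, Matrix.dotProduct_mulVec, Matrix.vecMul_conjTranspose, star_star]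
  refine Matrix.dotProduct_star_self_pos_iff.mpr fun h0 => hx (h ?_)
  rw [h0, Matrix.mulVec_zero]


/-- If `S` is symmetric about the origin and `V_{≤m}(S)` has full column
rank `p_m`, then for every real matrix `R̃ ∈ ℝ^{n×p_m}` of full row rank `n` (with
`n ≤ p_m`), the matrix `R̃ W R̃ᵀ` (`W = W^{D_S}_{≤m}`) is Hermitian positive definite and
`det(R̃ W R̃ᵀ) > 0` (a positive real number). -/
theorem dirichlet_wronskian_compression_posdef {d m n : ℕ}
    (S : Finset (Fin d → ℝ)) (hS : ∀ ω ∈ S, -ω ∈ S)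
    (hV : (VdMS m S).rank = (MIdx d m).card)
    (hn : n ≤ (MIdx d m).card)
    (R : Matrix (Fin n) ↥(MIdx d m) ℝ) (hR : R.rank = n) :
    ((R.map (fun a => (a : ℂ))) * wronskianC m (dirichletKer S) *
        (R.transpose.map (fun a => (a : ℂ)))).PosDef ∧
      (((R.map (fun a => (a : ℂ))) * wronskianC m (dirichletKer S) *
          (R.transpose.map (fun a => (a : ℂ)))).det.re > 0 ∧
        ((R.map (fun a => (a : ℂ))) * wronskianC m (dirichletKer S) *
          (R.transpose.map (fun a => (a : ℂ)))).det.im = 0) := by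
  classical
  set Rc : Matrix (Fin n) ↥(MIdx d m) ℂ := R.map (fun a => (a : ℂ)) with hRc
  -- rank of N
  have hNrank : (Nmat (m := m) S).rank = (MIdx d m).card := by
    rw [Nmat_eq_mul_diag, Matrix.rank_mul_eq_left_of_isUnit_det _ _ diag_det_unit, hV]
  have hNinj : Function.Injective (Nmat (m := m) S).mulVec := by
    refine mulVec_injective_of_rank _ ?_
    rw [hNrank, Fintype.card_coe]
  -- injectivity of Rcᵀ
  have hRRt : IsUnit ((R * Rᵀ).det) := by
    have hrk : (R * Rᵀ).rank = Fintype.card (Fin n) := by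
      rw [Matrix.rank_self_mul_transpose, hR, Fintype.card_fin]
    exact Matrix.isUnit_iff_isUnit_det _ |>.mp
      (Matrix.mulVec_injective_iff_isUnit.mp (mulVec_injective_of_rank _ hrk))
  have hmap : Rc * Rcᵀ = (R * Rᵀ).map (fun a => (a : ℂ)) := by
    rw [show ((fun a => (a : ℂ)) : ℝ → ℂ) = (Complex.ofRealHom : ℝ →+* ℂ) from rfl]
    rw [Matrix.map_mul]
    congr 1
  have hRcRct : IsUnit ((Rc * Rcᵀ).det) := by
    rw [hmap, show ((fun a => (a : ℂ)) : ℝ → ℂ) = (Complex.ofRealHom : ℝ →+* ℂ) from rfl]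
    rw [show ((R * Rᵀ).map ⇑(Complex.ofRealHom : ℝ →+* ℂ)).det
        = Complex.ofRealHom (R * Rᵀ).det from ((Complex.ofRealHom : ℝ →+* ℂ).map_det _).symm]
    rw [isUnit_iff_ne_zero]
    simpa using (isUnit_iff_ne_zero.mp hRRt)
  have hRtinj : Function.Injective (Rcᵀ).mulVec := by
    intro x y hxy
    have hinj := Matrix.mulVec_injective_iff_isUnit.mpr
      ((Matrix.isUnit_iff_isUnit_det _).mpr hRcRct)
    refine hinj ?_
    rw [← Matrix.mulVec_mulVec, ← Matrix.mulVec_mulVec, hxy]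
  -- M and posdef
  set M : Matrix ↥S (Fin n) ℂ := Nmat (m := m) S * Rcᵀ with hM
  have hMct : Mᴴ = Rc * (Nmat (m := m) S)ᴴ := by
    rw [hM, Matrix.conjTranspose_mul]
    congr 1
    ext i j
    simp [hRc, Matrix.conjTranspose_apply, Matrix.map_apply, Complex.conj_ofReal]
  have hB : Rc * wronskianC m (dirichletKer S) * Rcᵀ = Mᴴ * M := by
    rw [wronskian_eq, hMct, hM]
    rw [Matrix.mul_assoc, Matrix.mul_assoc, Matrix.mul_assoc]
  have hMinj : Function.Injective M.mulVec := by
    intro x y hxy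
    refine hRtinj (hNinj ?_)
    rwa [Matrix.mulVec_mulVec, Matrix.mulVec_mulVec, ← hM]
  have hPD : (Rc * wronskianC m (dirichletKer S) * Rcᵀ).PosDef := by
    rw [hB]; exact posDef_conjTranspose_mul_self_of_inj M hMinj
  refine ⟨hPD, ?_, ?_⟩
  · exact (Complex.lt_def.mp hPD.det_pos).1
  · exact (Complex.lt_def.mp hPD.det_pos).2.symm
end

section
/- Let Y = {y_1,…,y_n} ⊂ ℝ^d be a finite set of pairwise distinct points and fix ε_0 > 0. For N ∈ ℕ and ε ∈ [0, ε_0] let D_N(ε) be the n×n matrix with entries (D_N(ε))_{jl} = (2N)^{−d} Σ_{ω∈Γ_N} exp( i ⟨ ε(y_j − y_l)/N, ω⟩ ). Then the eigenvalues of D_N(ε) converge to those of Sinc_ε(Y) uniformly in ε: for every δ′ > 0 there exists M = M(ε_0, δ′) such that for all N > M and all ε ∈ [0, ε_0], every eigenvalue μ of D_N(ε) satisfies |λ − μ| ≤ δ′ for some eigenvalue λ of Sinc_ε(Y). -/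
open scoped BigOperators

/-- The uniform symmetric grid `Γ_N = {-N, …, N}^d ⊂ ℤ^d`. -/
noncomputable def gridSet (d N : ℕ) : Finset (Fin d → ℤ) :=
  Fintype.piFinset fun _ => Finset.Icc (-(N : ℤ)) (N : ℤ)

/-- The (unnormalized) sinc function: `sinc x = sin x / x` for `x ≠ 0`, `sinc 0 = 1`. -/
noncomputable def sinc (x : ℝ) : ℝ := if x = 0 then 1 else Real.sin x / x

/-- The normalized Dirichlet kernel matrix
`(D_N(ε))_{jl} = (2N)^{-d} Σ_{ω∈Γ_N} exp(i⟨ε(y_j - y_l)/N, ω⟩)`. -/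
noncomputable def DNe {d n : ℕ} (Y : Fin n → Fin d → ℝ) (N : ℕ) (ε : ℝ) :
    Matrix (Fin n) (Fin n) ℂ :=
  fun j l => ((((2 * (N : ℝ)) ^ d)⁻¹ : ℝ) : ℂ) *
    ∑ ω ∈ gridSet d N,
      Complex.exp (Complex.I * ((∑ i, ε * (Y j i - Y l i) / (N : ℝ) * (ω i : ℝ) : ℝ) : ℂ))

/-- The sinc kernel matrix `Sinc_ε(Y) = [Π_l sinc(ε((y_j)_l - (y_k)_l))]_{j,k}`. -/
noncomputable def sincMat {d n : ℕ} (Y : Fin n → Fin d → ℝ) (ε : ℝ) :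
    Matrix (Fin n) (Fin n) ℝ :=
  fun j k => ∏ l, sinc (ε * (Y j l - Y k l))

noncomputable def dker (N : ℕ) (t : ℝ) : ℝ :=
  (2*(N:ℝ))⁻¹ * ∑ k ∈ Finset.Icc (-(N:ℤ)) N, Real.cos (t * (k : ℝ) / N)

noncomputable def nsq {n : ℕ} (x : Fin n → ℂ) : ℝ := ∑ k, ‖x k‖ ^ 2

open Matrix

lemma abs_cos_sub_cos_le (a b : ℝ) : |Real.cos a - Real.cos b| ≤ |a - b| := by
  rw [Real.cos_sub_cos]
  have h1 : |Real.sin ((a + b) / 2)| ≤ 1 := Real.abs_sin_le_one _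
  have h2 : |Real.sin ((a - b) / 2)| ≤ |(a - b) / 2| := Real.abs_sin_le_abs
  calc |-2 * Real.sin ((a + b) / 2) * Real.sin ((a - b) / 2)|
      = 2 * |Real.sin ((a + b) / 2)| * |Real.sin ((a - b) / 2)| := by
        rw [abs_mul, abs_mul]; norm_num
    _ ≤ 2 * 1 * |(a - b) / 2| := by
        apply mul_le_mul (mul_le_mul le_rfl h1 (abs_nonneg _) (by norm_num)) h2 (abs_nonneg _)
        positivity
    _ = |a - b| := by rw [abs_div, abs_two]; ring

lemma sinc_eq_integral (t : ℝ) : sinc t = ∫ s in (0:ℝ)..1, Real.cos (t * s) := by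
  rcases eq_or_ne t 0 with h | h
  · simp [sinc, h]
  · rw [sinc, if_neg h, intervalIntegral.integral_comp_mul_left Real.cos h]
    simp [Real.sin_zero, div_eq_inv_mul]

lemma abs_sinc_le_one (t : ℝ) : |sinc t| ≤ 1 := by
  rcases eq_or_ne t 0 with h | h
  · simp [sinc, h]
  · rw [sinc, if_neg h, abs_div]
    rw [div_le_one (abs_pos.mpr h)]
    exact Real.abs_sin_le_abs

lemma riemann_bound (t : ℝ) (N : ℕ) (hN : 0 < N) :
    |(∑ k ∈ Finset.range N, Real.cos (t * ((k : ℝ) + 1) / N)) / N - sinc t| ≤ |t| / N := by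
  have hNR : (0:ℝ) < N := by exact_mod_cast hN
  have hcont : ∀ a b : ℝ, IntervalIntegrable (fun s => Real.cos (t * s)) MeasureTheory.volume a b :=
    fun a b => (Real.continuous_cos.comp (continuous_const.mul continuous_id)).intervalIntegrable a b
  have hsplit : sinc t = ∑ k ∈ Finset.range N, ∫ s in ((k:ℝ)/N)..(((k:ℝ)+1)/N), Real.cos (t * s) := by
    rw [sinc_eq_integral]
    have := intervalIntegral.sum_integral_adjacent_intervals (a := fun k : ℕ => (k : ℝ) / N)
      (f := fun s => Real.cos (t * s)) (μ := MeasureTheory.volume) (n := N)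
      (fun k _ => hcont _ _)
    simp only [Nat.cast_zero, zero_div, Nat.cast_add, Nat.cast_one,
      div_self (ne_of_gt hNR)] at this
    rw [← this]
  have key : ∀ k ∈ Finset.range N,
      |Real.cos (t * ((k : ℝ) + 1) / N) / N - ∫ s in ((k:ℝ)/N)..(((k:ℝ)+1)/N), Real.cos (t * s)|
        ≤ |t| / N ^ 2 := by
    intro k _
    have hle : (k : ℝ) / N ≤ ((k : ℝ) + 1) / N := by
      gcongr <;> linarith
    have hconst : Real.cos (t * ((k : ℝ) + 1) / N) / N
        = ∫ _ in ((k:ℝ)/N)..(((k:ℝ)+1)/N), Real.cos (t * ((k : ℝ) + 1) / N) := by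
      rw [intervalIntegral.integral_const, smul_eq_mul]
      field_simp
      ring
    rw [hconst, ← intervalIntegral.integral_sub (intervalIntegrable_const) (hcont _ _)]
    have hb : ∀ s ∈ Set.uIoc ((k:ℝ)/N) (((k:ℝ)+1)/N),
        ‖Real.cos (t * ((k : ℝ) + 1) / N) - Real.cos (t * s)‖ ≤ |t| / N := by
      intro s hs
      rw [Set.uIoc_of_le hle] at hs
      rw [Real.norm_eq_abs]
      calc |Real.cos (t * ((k : ℝ) + 1) / N) - Real.cos (t * s)|
          ≤ |t * ((k : ℝ) + 1) / N - t * s| := abs_cos_sub_cos_le _ _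
        _ = |t| * |((k : ℝ) + 1) / N - s| := by rw [← abs_mul]; ring_nf
        _ ≤ |t| * (1 / N) := by
            apply mul_le_mul_of_nonneg_left ?_ (abs_nonneg t)
            rw [abs_le]
            have h2 : ((k:ℝ)+1)/N - 1/N = (k:ℝ)/N := by field_simp; ring
            have h3 : (0:ℝ) ≤ 1/(N:ℝ) := by positivity
            constructor
            · linarith [hs.2]
            · linarith [hs.1]
        _ = |t| / N := by ring
    have := intervalIntegral.norm_integral_le_of_norm_le_const hb
    rw [Real.norm_eq_abs] at this
    calc |∫ s in ((k:ℝ)/N)..(((k:ℝ)+1)/N), (Real.cos (t * ((k : ℝ) + 1) / N) - Real.cos (t * s))|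
        ≤ |t| / N * |((k : ℝ) + 1)/N - (k:ℝ)/N| := this
      _ = |t| / N ^ 2 := by
          rw [show ((k : ℝ) + 1)/N - (k:ℝ)/N = 1/N by field_simp; ring,
            abs_of_nonneg (by positivity : (0:ℝ) ≤ 1/(N:ℝ)),
            div_mul_div_comm, mul_one, sq]
  calc |(∑ k ∈ Finset.range N, Real.cos (t * ((k : ℝ) + 1) / N)) / N - sinc t|
      = |∑ k ∈ Finset.range N, (Real.cos (t * ((k : ℝ) + 1) / N) / N
          - ∫ s in ((k:ℝ)/N)..(((k:ℝ)+1)/N), Real.cos (t * s))| := by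
        rw [hsplit, Finset.sum_sub_distrib, Finset.sum_div]
    _ ≤ ∑ k ∈ Finset.range N, |Real.cos (t * ((k : ℝ) + 1) / N) / N
          - ∫ s in ((k:ℝ)/N)..(((k:ℝ)+1)/N), Real.cos (t * s)| := Finset.abs_sum_le_sum_abs _ _
    _ ≤ ∑ k ∈ Finset.range N, |t| / N ^ 2 := Finset.sum_le_sum key
    _ = |t| / N := by
        rw [Finset.sum_const, Finset.card_range, nsmul_eq_mul]
        field_simp

lemma sum_Icc_symm (N : ℕ) (h : ℤ → ℝ) :
    ∑ k ∈ Finset.Icc (-(N:ℤ)) N, h k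
      = h 0 + ∑ j ∈ Finset.range N, (h (j+1) + h (-(j+1))) := by
  induction N with
  | zero => simp
  | succ n ih =>
    have h1 : Finset.Icc (-((n:ℤ)+1)) ((n:ℤ)+1)
        = insert (-((n:ℤ)+1)) (insert ((n:ℤ)+1) (Finset.Icc (-(n:ℤ)) n)) := by
      ext x; simp; omega
    have h2 : ((n:ℤ)+1) ∉ Finset.Icc (-(n:ℤ)) (n:ℤ) := by simp
    have h3 : (-((n:ℤ)+1)) ∉ insert ((n:ℤ)+1) (Finset.Icc (-(n:ℤ)) (n:ℤ)) := by simp; omega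
    push_cast
    rw [h1, Finset.sum_insert h3, Finset.sum_insert h2, ih, Finset.sum_range_succ]
    push_cast
    ring

lemma dker_sub_sinc (t : ℝ) (N : ℕ) (hN : 0 < N) :
    |dker N t - sinc t| ≤ (1 + |t|) / N := by
  have hNR : (0:ℝ) < N := by exact_mod_cast hN
  have hsum : ∑ k ∈ Finset.Icc (-(N:ℤ)) N, Real.cos (t * (k : ℝ) / N)
      = 1 + 2 * ∑ j ∈ Finset.range N, Real.cos (t * ((j:ℝ) + 1) / N) := by
    rw [sum_Icc_symm N (fun k => Real.cos (t * (k : ℝ) / N))]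
    have : ∀ j ∈ Finset.range N,
        (Real.cos (t * ((j:ℤ)+1 : ℤ) / N) + Real.cos (t * ((-((j:ℤ)+1) : ℤ) : ℝ) / N))
          = 2 * Real.cos (t * ((j:ℝ) + 1) / N) := by
      intro j _
      push_cast
      rw [show t * -((j:ℝ)+1) / N = -(t * ((j:ℝ)+1) / N) by ring, Real.cos_neg]
      ring
    rw [Finset.sum_congr rfl this, Finset.mul_sum]
    simp
  have hg : dker N t = 1/(2*(N:ℝ))
      + (∑ j ∈ Finset.range N, Real.cos (t * ((j:ℝ) + 1) / N)) / N := by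
    rw [dker, hsum]
    field_simp
  rw [hg]
  have h1 : |1/(2*(N:ℝ)) + ((∑ j ∈ Finset.range N, Real.cos (t * ((j:ℝ) + 1) / N)) / N - sinc t)|
      ≤ 1/(2*(N:ℝ)) + |t| / N := by
    refine (abs_add_le _ _).trans ?_
    gcongr
    · rw [abs_of_pos (by positivity)]
    · exact riemann_bound t N hN
  calc |1/(2*(N:ℝ)) + (∑ j ∈ Finset.range N, Real.cos (t * ((j:ℝ) + 1) / N)) / N - sinc t|
      ≤ 1/(2*(N:ℝ)) + |t| / N := by rw [add_sub_assoc]; exact h1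
    _ ≤ (1 + |t|) / N := by
        rw [add_div]
        gcongr
        linarith

lemma abs_dker_le (N : ℕ) (hN : 0 < N) (t : ℝ) : |dker N t| ≤ 3/2 := by
  have hNR : (0:ℝ) < N := by exact_mod_cast hN
  have hcard : (Finset.Icc (-(N:ℤ)) N).card = 2*N + 1 := by
    rw [Int.card_Icc]; omega
  calc |dker N t| ≤ (2*(N:ℝ))⁻¹ * ∑ k ∈ Finset.Icc (-(N:ℤ)) N, 1 := by
        rw [dker, abs_mul, abs_of_pos (by positivity : (0:ℝ) < (2*(N:ℝ))⁻¹)]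
        gcongr
        refine (Finset.abs_sum_le_sum_abs _ _).trans ?_
        exact Finset.sum_le_sum fun k _ => Real.abs_cos_le_one _
    _ = (2*(N:ℝ))⁻¹ * (2*N + 1) := by rw [Finset.sum_const, hcard]; push_cast; ring
    _ ≤ 3/2 := by
        rw [inv_mul_le_iff₀ (by positivity)]
        have : (1:ℝ) ≤ N := by exact_mod_cast hN
        nlinarith

lemma sin_sum_zero (N : ℕ) (a : ℝ) :
    ∑ k ∈ Finset.Icc (-(N:ℤ)) N, Real.sin (a * (k : ℝ)) = 0 := by
  rw [sum_Icc_symm N (fun k => Real.sin (a * (k : ℝ)))]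
  rw [Finset.sum_eq_zero, Int.cast_zero, mul_zero, Real.sin_zero, add_zero]
  intro j _
  push_cast
  rw [show a * -((j:ℝ)+1) = -(a * ((j:ℝ)+1)) by ring, Real.sin_neg]
  ring

lemma exp_sum_eq (N : ℕ) (a : ℝ) :
    ∑ k ∈ Finset.Icc (-(N:ℤ)) N, Complex.exp (((a * (k : ℝ) : ℝ) : ℂ) * Complex.I)
      = ((∑ k ∈ Finset.Icc (-(N:ℤ)) N, Real.cos (a * (k : ℝ)) : ℝ) : ℂ) := by
  have : ∀ k ∈ Finset.Icc (-(N:ℤ)) N,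
      Complex.exp (((a * (k : ℝ) : ℝ) : ℂ) * Complex.I)
        = ((Real.cos (a * (k:ℝ)) : ℝ) : ℂ) + ((Real.sin (a * (k:ℝ)) : ℝ) : ℂ) * Complex.I := by
    intro k _
    rw [Complex.exp_mul_I, Complex.ofReal_cos, Complex.ofReal_sin]
  rw [Finset.sum_congr rfl this, Finset.sum_add_distrib, ← Finset.sum_mul,
    ← Complex.ofReal_sum, ← Complex.ofReal_sum, sin_sum_zero]
  simp

lemma DNe_entry {d n : ℕ} (Y : Fin n → Fin d → ℝ) (N : ℕ) (hN : 0 < N) (ε : ℝ)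
    (j l : Fin n) :
    DNe Y N ε j l = ((∏ i, dker N (ε * (Y j i - Y l i)) : ℝ) : ℂ) := by
  have hNR : (0:ℝ) < N := by exact_mod_cast hN
  have hexp : ∀ ω ∈ gridSet d N,
      Complex.exp (Complex.I * ((∑ i, ε * (Y j i - Y l i) / (N : ℝ) * (ω i : ℝ) : ℝ) : ℂ))
        = ∏ i, Complex.exp (((ε * (Y j i - Y l i) / N * (ω i : ℝ) : ℝ) : ℂ) * Complex.I) := by
    intro ω _
    rw [mul_comm Complex.I, Complex.ofReal_sum, Finset.sum_mul, Complex.exp_sum]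
  rw [DNe]
  rw [Finset.sum_congr rfl hexp]
  rw [show (gridSet d N) = Fintype.piFinset (fun _ : Fin d => Finset.Icc (-(N:ℤ)) N) from rfl,
    ← Finset.prod_univ_sum (fun _ : Fin d => Finset.Icc (-(N:ℤ)) N)
      (fun i k => Complex.exp (((ε * (Y j i - Y l i) / N * (k : ℝ) : ℝ) : ℂ) * Complex.I))]
  have hfac : ∀ i : Fin d,
      (∑ k ∈ Finset.Icc (-(N:ℤ)) N,
        Complex.exp (((ε * (Y j i - Y l i) / N * (k : ℝ) : ℝ) : ℂ) * Complex.I))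
      = ((∑ k ∈ Finset.Icc (-(N:ℤ)) N,
          Real.cos (ε * (Y j i - Y l i) * (k : ℝ) / N) : ℝ) : ℂ) := by
    intro i
    have := exp_sum_eq N (ε * (Y j i - Y l i) / N)
    rw [this]
    congr 1
    apply Finset.sum_congr rfl
    intro k _
    congr 1
    ring
  rw [Finset.prod_congr rfl (fun i _ => hfac i)]
  rw [← Complex.ofReal_prod, ← Complex.ofReal_mul]
  congr 1
  have h2d : ((2 * (N : ℝ)) ^ d)⁻¹ = ∏ _i : Fin d, (2*(N:ℝ))⁻¹ := by
    rw [Finset.prod_const, Finset.card_univ, Fintype.card_fin, inv_pow]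
  rw [h2d, ← Finset.prod_mul_distrib]
  apply Finset.prod_congr rfl
  intro i _
  rw [dker]

lemma prod_sub_prod_abs_le {ι : Type*} (s : Finset ι) (a b : ι → ℝ) (B : ℝ) (hB : 1 ≤ B)
    (ha : ∀ i ∈ s, |a i| ≤ B) (hb : ∀ i ∈ s, |b i| ≤ B) :
    |∏ i ∈ s, a i - ∏ i ∈ s, b i| ≤ B ^ s.card * ∑ i ∈ s, |a i - b i| := by
  induction s using Finset.cons_induction with
  | empty => simp
  | cons i s his ih =>
    have hB0 : 0 ≤ B := le_trans zero_le_one hB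
    have hprodb : |∏ k ∈ s, b k| ≤ B ^ s.card := by
      rw [Finset.abs_prod]
      calc ∏ k ∈ s, |b k| ≤ ∏ k ∈ s, B :=
            Finset.prod_le_prod (fun k _ => abs_nonneg _)
              (fun k hk => hb k (Finset.mem_cons_of_mem hk))
        _ = B ^ s.card := Finset.prod_const B
    have ih' := ih (fun k hk => ha k (Finset.mem_cons_of_mem hk))
      (fun k hk => hb k (Finset.mem_cons_of_mem hk))
    rw [Finset.prod_cons, Finset.prod_cons, Finset.sum_cons, Finset.card_cons]
    have key : a i * ∏ k ∈ s, a k - b i * ∏ k ∈ s, b k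
        = a i * (∏ k ∈ s, a k - ∏ k ∈ s, b k) + (a i - b i) * ∏ k ∈ s, b k := by ring
    rw [key]
    calc |a i * (∏ k ∈ s, a k - ∏ k ∈ s, b k) + (a i - b i) * ∏ k ∈ s, b k|
        ≤ |a i| * |∏ k ∈ s, a k - ∏ k ∈ s, b k| + |a i - b i| * |∏ k ∈ s, b k| := by
          refine (abs_add_le _ _).trans ?_
          rw [abs_mul, abs_mul]
      _ ≤ B * (B ^ s.card * ∑ k ∈ s, |a k - b k|) + |a i - b i| * B ^ s.card :=
          add_le_add
            (mul_le_mul (ha i (Finset.mem_cons_self i s)) ih' (abs_nonneg _) hB0)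
            (mul_le_mul_of_nonneg_left hprodb (abs_nonneg _))
      _ ≤ B ^ (s.card + 1) * (|a i - b i| + ∑ k ∈ s, |a k - b k|) := by
          have h1 : (1:ℝ) ≤ B ^ 1 := by simpa using hB
          have h2 : B ^ s.card ≤ B ^ (s.card + 1) := by
            apply pow_le_pow_right₀ hB; omega
          have h3 : 0 ≤ ∑ k ∈ s, |a k - b k| :=
            Finset.sum_nonneg fun k _ => abs_nonneg _
          have h4 : 0 ≤ |a i - b i| := abs_nonneg _
          calc B * (B ^ s.card * ∑ k ∈ s, |a k - b k|) + |a i - b i| * B ^ s.card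
              = B ^ (s.card + 1) * ∑ k ∈ s, |a k - b k| + |a i - b i| * B ^ s.card := by ring
            _ ≤ B ^ (s.card + 1) * ∑ k ∈ s, |a k - b k| + |a i - b i| * B ^ (s.card + 1) := by
                gcongr
            _ = B ^ (s.card + 1) * (|a i - b i| + ∑ k ∈ s, |a k - b k|) := by ring

lemma star_dot {n : ℕ} (x : Fin n → ℂ) :
    dotProduct (star x) x = ((nsq x : ℝ) : ℂ) := by
  simp only [dotProduct, nsq, Pi.star_apply, Complex.ofReal_sum]
  apply Finset.sum_congr rfl
  intro k _
  rw [RCLike.star_def, mul_comm, Complex.mul_conj']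
  norm_cast

lemma nsq_unitary {n : ℕ} {U : Matrix (Fin n) (Fin n) ℂ} (hU : Uᴴ * U = 1)
    (x : Fin n → ℂ) : nsq (U *ᵥ x) = nsq x := by
  have h : dotProduct (star (U *ᵥ x)) (U *ᵥ x) = dotProduct (star x) x := by
    rw [Matrix.star_mulVec, dotProduct_mulVec, Matrix.vecMul_vecMul, hU,
      Matrix.vecMul_one]
  rw [star_dot, star_dot] at h
  exact_mod_cast h

lemma eig_perturb {n : ℕ} (A : Matrix (Fin n) (Fin n) ℂ) (S : Matrix (Fin n) (Fin n) ℝ)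
    (hA : A.IsHermitian) (hS : S.IsHermitian) (η : ℝ)
    (hent : ∀ j l, ‖A j l - ((S j l : ℝ) : ℂ)‖ ≤ η) (i : Fin n) :
    ∃ j, |hS.eigenvalues j - hA.eigenvalues i| ≤ n * η := by
  have hη : 0 ≤ η := le_trans (norm_nonneg _) (hent i i)
  set μ := hA.eigenvalues i with hμ
  set v : Fin n → ℂ := ⇑(hA.eigenvectorBasis i) with hv
  have hAv : A *ᵥ v = (μ : ℂ) • v := by
    have h := hA.mulVec_eigenvectorBasis i
    funext k
    have hk := congrFun h k
    simp only [hv]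
    rw [hk]
    simp only [Pi.smul_apply, Complex.real_smul, smul_eq_mul]
    rfl
  -- complexified matrices
  set f : ℝ →+* ℂ := Complex.ofRealHom with hf
  set T : Matrix (Fin n) (Fin n) ℂ := S.map ⇑f with hT
  set U : Matrix (Fin n) (Fin n) ℝ := ↑(hS.eigenvectorUnitary) with hU
  set U' : Matrix (Fin n) (Fin n) ℂ := U.map ⇑f with hU'
  have hstarmap : (star U).map ⇑f = star U' := by
    rw [Matrix.star_eq_conjTranspose, Matrix.star_eq_conjTranspose, hU',
      Matrix.conjTranspose_map ⇑f (fun r => (Complex.conj_ofReal r).symm)]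
  have hU1 : star U' * U' = 1 := by
    rw [← hstarmap, hU', ← Matrix.map_mul]
    rw [Matrix.mem_unitaryGroup_iff'.mp hS.eigenvectorUnitary.2]
    exact Matrix.map_one _ (map_zero f) (map_one f)
  have hU2 : U' * star U' = 1 := by
    rw [← hstarmap, hU', ← Matrix.map_mul]
    rw [Matrix.mem_unitaryGroup_iff.mp hS.eigenvectorUnitary.2]
    exact Matrix.map_one _ (map_zero f) (map_one f)
  set D' : Matrix (Fin n) (Fin n) ℂ :=
    Matrix.diagonal (fun j => ((hS.eigenvalues j : ℝ) : ℂ)) with hD'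
  have hTdec : T = U' * D' * star U' := by
    rw [hT]
    conv_lhs => rw [hS.spectral_theorem, Unitary.conjStarAlgAut_apply]
    rw [Matrix.map_mul, Matrix.map_mul, hstarmap]
    congr 1
    congr 1
    rw [Matrix.diagonal_map (map_zero f)]
    congr 1
  set c : Fin n → ℂ := star U' *ᵥ v with hc
  have hvc : v = U' *ᵥ c := by
    rw [hc, Matrix.mulVec_mulVec, hU2, Matrix.one_mulVec]
  set w : Fin n → ℂ := T *ᵥ v - (μ : ℂ) • v with hw
  -- Step B : nsq w ≤ (n*η)^2 * nsq v
  have hwB : nsq w ≤ ((n : ℝ) * η) ^ 2 * nsq v := by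
    have hwv : w = (T - A) *ᵥ v := by rw [hw, Matrix.sub_mulVec, hAv]
    have hcoord : ∀ jj, ‖w jj‖ ≤ η * ∑ k, ‖v k‖ := by
      intro jj
      rw [hwv]
      have : (T - A) *ᵥ v = fun jj => ∑ k, (T jj k - A jj k) * v k := by
        funext jj; simp [Matrix.mulVec, dotProduct, Matrix.sub_apply]
      rw [this]
      calc ‖∑ k, (T jj k - A jj k) * v k‖ ≤ ∑ k, ‖(T jj k - A jj k) * v k‖ :=
            norm_sum_le _ _
        _ ≤ ∑ k, η * ‖v k‖ := by
            apply Finset.sum_le_sum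
            intro k _
            rw [norm_mul]
            apply mul_le_mul_of_nonneg_right ?_ (norm_nonneg _)
            have := hent jj k
            rw [← norm_neg]
            simpa [hT, hf, Matrix.sub_apply, Matrix.map_apply, neg_sub] using this
        _ = η * ∑ k, ‖v k‖ := by rw [Finset.mul_sum]
    have hsq : (∑ k, ‖v k‖) ^ 2 ≤ (n : ℝ) * nsq v := by
      have := sq_sum_le_card_mul_sum_sq (s := (Finset.univ : Finset (Fin n)))
        (f := fun k => ‖v k‖)
      simpa [nsq, Finset.card_univ] using this
    calc nsq w = ∑ jj, ‖w jj‖ ^ 2 := rfl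
      _ ≤ ∑ jj : Fin n, (η * ∑ k, ‖v k‖) ^ 2 := by
          apply Finset.sum_le_sum
          intro jj _
          exact pow_le_pow_left₀ (norm_nonneg _) (hcoord jj) 2
      _ = (n : ℝ) * (η ^ 2 * (∑ k, ‖v k‖) ^ 2) := by
          rw [Finset.sum_const, Finset.card_univ, Fintype.card_fin, nsmul_eq_mul]
          ring
      _ ≤ (n : ℝ) * (η ^ 2 * ((n : ℝ) * nsq v)) := by
          exact mul_le_mul_of_nonneg_left
            (mul_le_mul_of_nonneg_left hsq (sq_nonneg _)) (Nat.cast_nonneg n)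
      _ = ((n : ℝ) * η) ^ 2 * nsq v := by ring
  -- Step C : nsq w = ∑ j, (λ_j - μ)^2 * ‖c j‖^2
  set e : Fin n → ℂ := fun j => (((hS.eigenvalues j - μ : ℝ)) : ℂ) * c j with he
  have hwe : w = U' *ᵥ e := by
    have hTv : T *ᵥ v = U' *ᵥ (D' *ᵥ c) := by
      rw [hTdec, hc, Matrix.mulVec_mulVec, Matrix.mulVec_mulVec]
    have hμv : (μ : ℂ) • v = U' *ᵥ ((μ : ℂ) • c) := by
      rw [hvc, Matrix.mulVec_smul]
    rw [hw, hTv, hμv, ← Matrix.mulVec_sub]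
    have harg : D' *ᵥ c - (μ : ℂ) • c = e := by
      funext j
      simp only [Pi.sub_apply, Pi.smul_apply, he, smul_eq_mul, hD', Matrix.mulVec_diagonal]
      push_cast
      ring
    rw [harg]
  have hwnsq : nsq w = ∑ j, (hS.eigenvalues j - μ) ^ 2 * ‖c j‖ ^ 2 := by
    rw [hwe, nsq_unitary hU1, nsq]
    apply Finset.sum_congr rfl
    intro j _
    rw [he, norm_mul, mul_pow, Complex.norm_real, Real.norm_eq_abs, sq_abs]
  have hnsqc : nsq c = nsq v := by
    conv_rhs => rw [hvc]
    rw [nsq_unitary hU1]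
  -- v ≠ 0, so nsq v > 0
  have hvne : v ≠ 0 := by
    have h1 : ‖hA.eigenvectorBasis i‖ = 1 := (hA.eigenvectorBasis).orthonormal.1 i
    have h2 : hA.eigenvectorBasis i ≠ 0 := by
      intro h0; rw [h0, norm_zero] at h1; norm_num at h1
    intro h
    apply h2
    apply (WithLp.equiv 2 (Fin n → ℂ)).injective
    exact h
  have hnsqv : 0 < nsq v := by
    rcases Function.ne_iff.mp hvne with ⟨k, hk⟩
    apply Finset.sum_pos' (fun k _ => by positivity)
    exact ⟨k, Finset.mem_univ k, pow_pos (norm_pos_iff.mpr hk) 2⟩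
  -- pick the minimizing j
  obtain ⟨j0, -, hj0⟩ := Finset.exists_min_image Finset.univ
    (fun j => (hS.eigenvalues j - μ) ^ 2) ⟨i, Finset.mem_univ i⟩
  refine ⟨j0, ?_⟩
  have hlow : (hS.eigenvalues j0 - μ) ^ 2 * nsq v ≤ nsq w := by
    rw [hwnsq, ← hnsqc, nsq, Finset.mul_sum]
    apply Finset.sum_le_sum
    intro j _
    exact mul_le_mul_of_nonneg_right (hj0 j (Finset.mem_univ j)) (by positivity)
  have hfin : (hS.eigenvalues j0 - μ) ^ 2 ≤ ((n : ℝ) * η) ^ 2 := by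
    have := hlow.trans hwB
    exact le_of_mul_le_mul_right this hnsqv
  calc |hS.eigenvalues j0 - μ| = Real.sqrt ((hS.eigenvalues j0 - μ) ^ 2) :=
        (Real.sqrt_sq_eq_abs _).symm
    _ ≤ Real.sqrt (((n : ℝ) * η) ^ 2) := Real.sqrt_le_sqrt hfin
    _ = (n : ℝ) * η := Real.sqrt_sq (by positivity)

/-- For `Y` a finite set of pairwise distinct points and `ε₀ > 0`, the
eigenvalues of the Hermitian matrices `D_N(ε)` converge to those of the symmetric matrices
`Sinc_ε(Y)` uniformly in `ε ∈ [0, ε₀]`: for every `δ'` > 0` there is `M` such that ... -/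
theorem dirichlet_matrix_eigenvalues_unif_tendsto_sinc {d n : ℕ}
    (Y : Fin n → Fin d → ℝ) (hY : Function.Injective Y)
    (ε₀ : ℝ) (hε₀ : 0 < ε₀) :
    ∀ δ' : ℝ, 0 < δ' → ∃ M : ℕ, ∀ N : ℕ, M < N →
      ∀ ε : ℝ, 0 ≤ ε → ε ≤ ε₀ →
        ∀ (hH : (DNe Y N ε).IsHermitian) (hS : (sincMat Y ε).IsHermitian),
          ∀ i : Fin n, ∃ j : Fin n,
            |hS.eigenvalues j - hH.eigenvalues i| ≤ δ' := by
  intro δ' hδ'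
  set R : ℝ := ∑ j : Fin n, ∑ l : Fin n, ∑ i : Fin d, |Y j i - Y l i| with hR
  have hR0 : 0 ≤ R := by
    apply Finset.sum_nonneg; intro j _
    apply Finset.sum_nonneg; intro l _
    exact Finset.sum_nonneg fun i _ => abs_nonneg _
  set Cbig : ℝ := (n : ℝ) * (3/2) ^ d * ((d : ℝ) + ε₀ * R) with hCbig
  have hCbig0 : 0 ≤ Cbig := by positivity
  obtain ⟨M, hM⟩ := exists_nat_gt (Cbig / δ')
  refine ⟨M, fun N hMN ε hε0 hεε hH hS i => ?_⟩
  have hN : 0 < N := lt_of_le_of_lt (Nat.zero_le M) hMN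
  have hNR : (0:ℝ) < N := by exact_mod_cast hN
  set η : ℝ := (3/2) ^ d * ((d : ℝ) + ε₀ * R) / N with hη
  have hent : ∀ j l, ‖DNe Y N ε j l - ((sincMat Y ε j l : ℝ) : ℂ)‖ ≤ η := by
    intro j l
    rw [DNe_entry Y N hN ε j l, show sincMat Y ε j l = ∏ i, sinc (ε * (Y j i - Y l i)) from rfl,
      ← Complex.ofReal_sub, Complex.norm_real, Real.norm_eq_abs]
    have hsum_t : ∑ i : Fin d, |ε * (Y j i - Y l i)| ≤ ε₀ * R := by
      have h1 : ∑ i : Fin d, |ε * (Y j i - Y l i)| ≤ ε₀ * ∑ i : Fin d, |Y j i - Y l i| := by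
        rw [Finset.mul_sum]
        apply Finset.sum_le_sum
        intro i _
        rw [abs_mul, abs_of_nonneg hε0]
        exact mul_le_mul_of_nonneg_right hεε (abs_nonneg _)
      refine h1.trans ?_
      apply mul_le_mul_of_nonneg_left ?_ (le_of_lt hε₀)
      have h2 : ∑ i : Fin d, |Y j i - Y l i| ≤ ∑ l' : Fin n, ∑ i : Fin d, |Y j i - Y l' i| := by
        apply Finset.single_le_sum (f := fun l' => ∑ i : Fin d, |Y j i - Y l' i|)
          (fun l' _ => Finset.sum_nonneg fun i _ => abs_nonneg _) (Finset.mem_univ l)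
      refine h2.trans ?_
      apply Finset.single_le_sum (f := fun j' => ∑ l' : Fin n, ∑ i : Fin d, |Y j' i - Y l' i|)
        (fun j' _ => Finset.sum_nonneg fun l' _ => Finset.sum_nonneg fun i _ => abs_nonneg _)
        (Finset.mem_univ j)
    calc |(∏ i, dker N (ε * (Y j i - Y l i))) - ∏ i, sinc (ε * (Y j i - Y l i))|
        ≤ (3/2 : ℝ) ^ (Finset.univ : Finset (Fin d)).card
            * ∑ i : Fin d, |dker N (ε * (Y j i - Y l i)) - sinc (ε * (Y j i - Y l i))| := by
          apply prod_sub_prod_abs_le _ _ _ (3/2) (by norm_num)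
          · exact fun i _ => abs_dker_le N hN _
          · exact fun i _ => (abs_sinc_le_one _).trans (by norm_num)
      _ ≤ (3/2 : ℝ) ^ d * ∑ i : Fin d, (1 + |ε * (Y j i - Y l i)|) / N := by
          rw [Finset.card_univ, Fintype.card_fin]
          gcongr with i _
          exact dker_sub_sinc _ N hN
      _ ≤ η := by
          rw [hη, ← Finset.sum_div, mul_div_assoc]
          gcongr
          rw [Finset.sum_add_distrib, Finset.sum_const, Finset.card_univ, Fintype.card_fin,
            nsmul_eq_mul, mul_one]
          exact add_le_add le_rfl hsum_t
  obtain ⟨j, hj⟩ := eig_perturb (DNe Y N ε) (sincMat Y ε) hH hS η hent i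
  refine ⟨j, hj.trans ?_⟩
  have hval : (n : ℝ) * η = Cbig / N := by
    rw [hη, hCbig]; field_simp
  rw [hval]
  rw [div_le_iff₀ hNR]
  have h1 : Cbig / δ' < N := hM.trans_le (by exact_mod_cast Nat.le_of_lt hMN)
  rw [div_lt_iff₀ hδ'] at h1
  nlinarith
end
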